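/- Let R and m be natural numbers with m ≥ 1, let n = m(2R+1), and suppose n is even. For b : Fin m → Bool define x_b : ZMod n → Bool by x_b(j) = xor (b(⌊j.val/(2R+1)⌋)) (j.val % 2 = 1), where j.val ∈ {0,…,n−1} is the canonical representative. Then the average over all 2^m choices of b of the number of j ∈ ZMod n with x_b(j) ≠ x_b(j+1) equals n·(2R + 1/2)/(2R + 1), i.e. (1/2^m)·Σ_{b : Fin m → Bool} #{j ∈ ZMod n : x_b(j) ≠ x_b(j+1)} = m·(2R + 1/2). -/

import Mathlib

/-!
Exchange the two sums and count, for each edge `(j, j + 1)` of the cycle, the `b` on which its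
endpoints disagree. Inside a block both endpoints read the same bit of `b` with opposite parity
flips, so they disagree for all `2 ^ m` choices. Across a block boundary they read two different
bits of `b`, so they disagree for exactly half of them; this includes the wrap-around edge
`(n - 1, 0)`, because `n` even forces `m ≥ 2`. With `m` boundary edges among the `n` edges the
total is `2 ^ m * (n - m / 2) = 2 ^ m * m * (2 * R + 1 / 2)`.
-/

open Finset

theorem Finset.two_mul_card_filter_of_involutive {α : Type*} [Fintype α] {P : α → Prop}
    [DecidablePred P] {f : α → α} (hf : Function.Involutive f)
    (hP : ∀ a, P (f a) ↔ ¬ P a) :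
    2 * #{a | P a} = Fintype.card α := by
  have hswap : #{a | ¬ P a} = #{a | P a} :=
    card_nbij' f f (fun a ha => by simpa [hP] using ha) (fun a ha => by simpa [hP] using ha)
      (fun a _ => hf a) (fun a _ => hf a)
  rw [two_mul, ← card_univ, ← card_filter_add_card_filter_not (s := univ) P, hswap]

theorem two_mul_card_xor_ne_xor {ι : Type*} [Fintype ι] [DecidableEq ι] {k k' : ι}
    (hk : k ≠ k') (p p' : Bool) :
    2 * #{b : ι → Bool | xor (b k) p ≠ xor (b k') p'} = 2 ^ Fintype.card ι := by
  rw [two_mul_card_filter_of_involutive (f := fun b => Function.update b k (!b k)),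
    Fintype.card_fun, Fintype.card_bool]
  · intro b
    simp
  · intro b
    simp only [Function.update_self, Function.update_of_ne hk.symm]
    cases b k <;> cases b k' <;> cases p <;> cases p' <;> simp

theorem ZMod.val_add_one_of_lt {n : ℕ} {a : ZMod n} (h : a.val + 1 < n) :
    (a + 1).val = a.val + 1 := by
  have : NeZero n := ⟨by omega⟩
  rw [ZMod.val_add, ZMod.val_one_eq_one_mod, Nat.mod_eq_of_lt (by omega : 1 < n),
    Nat.mod_eq_of_lt h]

theorem ZMod.add_one_eq_zero_of_val_add_one_eq {n : ℕ} [NeZero n] {a : ZMod n}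
    (h : a.val + 1 = n) : a + 1 = 0 := by
  rw [← ZMod.natCast_zmod_val a, ← Nat.cast_add_one, h, ZMod.natCast_self]

section Blocks

variable {m d n : ℕ} [NeZero n] (hn : n = m * d)

def blockOf (j : ZMod n) : Fin m :=
  ⟨j.val / d, Nat.div_lt_of_lt_mul (by rw [mul_comm, ← hn]; exact j.val_lt)⟩

def blockPattern (b : Fin m → Bool) (j : ZMod n) : Bool :=
  xor (b (blockOf hn j)) (decide (j.val % 2 = 1))

include hn in
theorem val_add_one_lt_of_not_dvd {j : ZMod n} (hj : ¬ d ∣ j.val + 1) : j.val + 1 < n := by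
  refine lt_of_le_of_ne j.val_lt ?_
  intro h
  exact hj (by rw [h, hn]; exact dvd_mul_left d m)

theorem blockOf_add_one_of_not_dvd {j : ZMod n} (hj : ¬ d ∣ j.val + 1) :
    blockOf hn (j + 1) = blockOf hn j := by
  ext
  simp only [blockOf, ZMod.val_add_one_of_lt (val_add_one_lt_of_not_dvd hn hj),
    Nat.succ_div_of_not_dvd hj]

theorem blockOf_add_one_ne_of_dvd (hm : 2 ≤ m) {j : ZMod n} (hj : d ∣ j.val + 1) :
    blockOf hn (j + 1) ≠ blockOf hn j := by
  have hsucc : (j.val + 1) / d = j.val / d + 1 := Nat.succ_div_of_dvd hj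
  intro h
  have hval := congrArg Fin.val h
  simp only [blockOf] at hval
  rcases (show j.val + 1 ≤ n from j.val_lt).lt_or_eq with hlt | hwrap
  · rw [ZMod.val_add_one_of_lt hlt] at hval
    omega
  · rw [ZMod.add_one_eq_zero_of_val_add_one_eq hwrap, ZMod.val_zero, Nat.zero_div] at hval
    have hd : 0 < d := Nat.pos_of_ne_zero (right_ne_zero_of_mul (hn ▸ NeZero.ne n))
    rw [hwrap, ← hval, hn, Nat.mul_div_cancel _ hd] at hsucc
    omega

theorem two_mul_card_blockPattern_ne_add (hm : 2 ≤ m) (j : ZMod n) :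
    2 * #{b | blockPattern hn b j ≠ blockPattern hn b (j + 1)} +
      (if d ∣ j.val + 1 then 2 ^ m else 0) = 2 * 2 ^ m := by
  by_cases hj : d ∣ j.val + 1
  · have hcard : 2 * #{b | blockPattern hn b j ≠ blockPattern hn b (j + 1)} = 2 ^ m :=
      (two_mul_card_xor_ne_xor (blockOf_add_one_ne_of_dvd hn hm hj).symm _ _).trans
        (by rw [Fintype.card_fin])
    rw [if_pos hj, hcard, two_mul]
  · have hflip : ∀ b, blockPattern hn b j ≠ blockPattern hn b (j + 1) := by
      intro b
      simp only [blockPattern, blockOf_add_one_of_not_dvd hn hj,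
        ZMod.val_add_one_of_lt (val_add_one_lt_of_not_dvd hn hj)]
      cases b (blockOf hn j) <;> simp [Nat.succ_mod_two_eq_one_iff] <;> omega
    simp [hj, hflip]

include hn in
theorem card_filter_dvd_val_add_one : #{j : ZMod n | d ∣ j.val + 1} = m := by
  have hd : 0 < d := Nat.pos_of_ne_zero (right_ne_zero_of_mul (hn ▸ NeZero.ne n))
  rw [← Nat.mul_div_cancel m hd, ← hn, ← Nat.card_multiples]
  refine card_nbij' ZMod.val (fun i => (i : ZMod n)) ?_ ?_ ?_ ?_
  · intro j hj
    simpa [ZMod.val_lt] using hj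
  · intro i hi
    simp_all [Nat.mod_eq_of_lt]
  · intro j _
    exact ZMod.natCast_zmod_val j
  · intro i hi
    exact ZMod.val_cast_of_lt (by simp_all)

theorem two_mul_sum_card_blockPattern_ne_add (hm : 2 ≤ m) :
    2 * ∑ b, #{j | blockPattern hn b j ≠ blockPattern hn b (j + 1)} + 2 ^ m * m =
      2 * 2 ^ m * n := by
  have hswap : ∑ b, #{j | blockPattern hn b j ≠ blockPattern hn b (j + 1)} =
      ∑ j, #{b | blockPattern hn b j ≠ blockPattern hn b (j + 1)} :=
    sum_card_bipartiteAbove_eq_sum_card_bipartiteBelow _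
  calc 2 * ∑ b, #{j | blockPattern hn b j ≠ blockPattern hn b (j + 1)} + 2 ^ m * m
      = ∑ j : ZMod n, (2 * #{b | blockPattern hn b j ≠ blockPattern hn b (j + 1)} +
          if d ∣ j.val + 1 then 2 ^ m else 0) := by
        rw [hswap, mul_sum, sum_add_distrib, ← sum_filter, sum_const, smul_eq_mul,
          card_filter_dvd_val_add_one hn, mul_comm m]
    _ = ∑ _j : ZMod n, 2 * 2 ^ m :=
        sum_congr rfl fun j _ => two_mul_card_blockPattern_ne_add hn hm j
    _ = 2 * 2 ^ m * n := by rw [sum_const, card_univ, ZMod.card, smul_eq_mul, mul_comm]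

end Blocks

theorem stmt8 (R m n : ℕ) (hn : n = m * (2 * R + 1)) (hne : Even n)
    [NeZero n]
    (xb : (Fin m → Bool) → (ZMod n) → Bool)
    (hxb : ∀ (b : Fin m → Bool) (j : ZMod n),
      xb b j = xor (b ⟨j.val / (2 * R + 1),
          Nat.div_lt_of_lt_mul (by rw [mul_comm]; exact hn ▸ j.val_lt)⟩)
        (decide (j.val % 2 = 1))) :
    (1 / (2 : ℝ) ^ m) *
      ∑ b : Fin m → Bool,
        ((Finset.univ.filter (fun j : ZMod n => xb b j ≠ xb b (j + 1))).card : ℝ) =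
      m * (2 * R + 1 / 2) := by
  have hpattern : xb = blockPattern hn := funext fun b => funext (hxb b)
  have hm : 2 ≤ m := by
    have hm0 : m ≠ 0 := left_ne_zero_of_mul (hn ▸ NeZero.ne n)
    have hmeven : Even m := (Nat.even_mul.mp (hn ▸ hne)).resolve_right (by simp)
    obtain ⟨k, rfl⟩ := hmeven
    omega
  have hcount :
      (2 : ℝ) * ∑ b, (#{j | blockPattern hn b j ≠ blockPattern hn b (j + 1)} : ℝ) +
        2 ^ m * m = 2 * 2 ^ m * n := by
    exact_mod_cast two_mul_sum_card_blockPattern_ne_add hn hm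
  have hnR : (n : ℝ) = m * (2 * R + 1) := by exact_mod_cast hn
  rw [hpattern]
  field_simp
  linear_combination hcount + 2 * 2 ^ m * hnR
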